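/- arXiv:2306.07718 — 2 statements merged into one kernel-verified Lean document; each statement's English description precedes it below -/
import Mathlib

section
/- Let p be prime, q = p^m, and let h < m. Fix a j-dimensional F_p-subspace U of F_q with 0 <= j <= h. Define G(U) to be the set of vectors a = (a_0,...,a_h) in F_q^{h+1} such that every element of U is a root of the linearized polynomial f_a(x) = sum_{i=0}^h a_i x^{p^i}. Then |G(U)| = q^{h+1-j}. -/
/-- Gaussian binomial coefficient (defined via the `q`-Pascal recurrence). -/
def gaussBinom (p : ℕ) : ℕ → ℕ → ℕ
  | _, 0 => 1
  | 0, _+1 => 0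
  | n+1, k+1 => gaussBinom p n k + p^(k+1) * gaussBinom p n (k+1)

/-- Gaussian binomial coefficient with integer lower index (`0` for negative index). -/
def gaussBinomI (p n : ℕ) (k : ℤ) : ℕ := if 0 ≤ k then gaussBinom p n k.toNat else 0

/-!
Write `b` for an `𝔽_p`-basis of `U`. Since `f_a` is `𝔽_p`-linear, `a ∈ G(U)` iff `f_a(b_k) = 0` for
all `k`, so `G(U)` is the kernel of the `F_q`-linear map `a ↦ (f_a(b_k))_k` from `F_q^(h+1)` to
`F_q^j`. On coefficient vectors supported in the first `min(h + 1, j)` places this map is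
injective, because there `f_a` has degree below `p^j` yet vanishes on the `p^j` elements of `U`.
Hence it is onto when `j ≤ h + 1` and injective otherwise, and its kernel has dimension `h + 1 - j`
(truncated subtraction).
-/

open Finset Polynomial

section LinearizedPolynomial

variable {F : Type*} [Field F] (p : ℕ) {n : ℕ}

noncomputable def linearizedPoly (a : Fin n → F) : F[X] :=
  ∑ i, C (a i) * X ^ p ^ (i : ℕ)

variable {p}

lemma eval_linearizedPoly (a : Fin n → F) (x : F) :
    (linearizedPoly p a).eval x = ∑ i, a i * x ^ p ^ (i : ℕ) := by
  simp [linearizedPoly, eval_finsetSum]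

lemma coeff_linearizedPoly_pow (hp : 1 < p) (a : Fin n → F) (i : Fin n) :
    (linearizedPoly p a).coeff (p ^ (i : ℕ)) = a i := by
  have hinj : ∀ k : Fin n, p ^ (i : ℕ) = p ^ (k : ℕ) ↔ i = k := fun k =>
    (Nat.pow_right_injective hp).eq_iff.trans Fin.val_inj
  simp [linearizedPoly, hinj]

lemma degree_linearizedPoly_lt (hp : 1 < p) (a : Fin n → F) :
    (linearizedPoly p a).degree < (p ^ n : ℕ) := by
  rw [← mem_degreeLT]
  refine Submodule.sum_mem _ fun i _ => mem_degreeLT.mpr ?_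
  exact (degree_C_mul_X_pow_le _ _).trans_lt (by exact_mod_cast Nat.pow_lt_pow_right hp i.2)

lemma eq_zero_of_linearizedPoly_eval_eq_zero (hp : 1 < p) (a : Fin n → F) {ι : Type*}
    [Fintype ι] {f : ι → F} (hf : Function.Injective f)
    (hroot : ∀ k, (linearizedPoly p a).eval (f k) = 0) (hcard : p ^ n ≤ Fintype.card ι) :
    a = 0 := by
  by_contra ha
  obtain ⟨i, hi⟩ := Function.ne_iff.mp ha
  have hP : linearizedPoly p a ≠ 0 := fun hP =>
    hi (by rw [← coeff_linearizedPoly_pow hp a i, hP, coeff_zero, Pi.zero_apply])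
  exact hP <| eq_zero_of_natDegree_lt_card_of_eval_eq_zero _ hf hroot <|
    ((natDegree_lt_iff_degree_lt hP).mpr (degree_linearizedPoly_lt hp a)).trans_le hcard

end LinearizedPolynomial

section LinearizedMap

variable (p : ℕ) [Fact p.Prime] {F : Type*} [Field F] [Algebra (ZMod p) F] [CharP F p] {n : ℕ}

def linearizedMap (a : Fin n → F) : F →ₗ[ZMod p] F where
  toFun x := ∑ i, a i * x ^ p ^ (i : ℕ)
  map_add' x y := by simp only [add_pow_char_pow, mul_add, sum_add_distrib]
  map_smul' c x := by
    simp only [_root_.smul_pow, ZMod.pow_card_pow, mul_smul_comm, smul_sum, RingHom.id_apply]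

def linearizedEval (n : ℕ) {ι : Type*} (v : ι → F) : (Fin n → F) →ₗ[F] ι → F where
  toFun a k := linearizedMap p a (v k)
  map_add' a b := by
    ext k
    simp [linearizedMap, add_mul, sum_add_distrib]
  map_smul' c a := by
    ext k
    simp [linearizedMap, mul_assoc, mul_sum]

@[simp]
lemma linearizedMap_apply (a : Fin n → F) (x : F) :
    linearizedMap p a x = ∑ i, a i * x ^ p ^ (i : ℕ) :=
  rfl

lemma linearizedMap_append_zero (a : Fin n → F) (k : ℕ) :
    linearizedMap p (Fin.append a (0 : Fin k → F)) = linearizedMap p a := by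
  ext x
  simp [Fin.sum_univ_add]

variable {p} {ι : Type*} {U : Submodule (ZMod p) F}

lemma mem_ker_linearizedEval_iff (b : Module.Basis ι (ZMod p) U) (a : Fin n → F) :
    a ∈ LinearMap.ker (linearizedEval p n fun k => (b k : F)) ↔
      ∀ u ∈ U, linearizedMap p a u = 0 := by
  have hext := b.ext (f₁ := linearizedMap p a ∘ₗ U.subtype) (f₂ := 0)
  constructor
  · intro ha u hu
    exact LinearMap.congr_fun (hext fun k => congr_fun ha k) ⟨u, hu⟩
  · intro ha
    ext k
    exact ha _ (b k).2

lemma linearizedEval_injective [Fintype ι] (b : Module.Basis ι (ZMod p) U)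
    (hn : n ≤ Fintype.card ι) :
    Function.Injective (linearizedEval p n fun k => (b k : F)) := by
  have hp : 1 < p := (Fact.out : p.Prime).one_lt
  have : Module.Finite (ZMod p) U := Module.Finite.of_basis b
  have : Finite U := Module.finite_of_finite (ZMod p)
  have : Fintype U := Fintype.ofFinite U
  have hcardU : Fintype.card U = p ^ Fintype.card ι := by
    rw [← Nat.card_eq_fintype_card, Module.natCard_eq_pow_finrank (K := ZMod p), Nat.card_zmod,
      Module.finrank_eq_card_basis b]
  rw [← LinearMap.ker_eq_bot, LinearMap.ker_eq_bot']
  intro a ha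
  refine eq_zero_of_linearizedPoly_eval_eq_zero hp a Subtype.val_injective (f := U.subtype)
    (fun u => ?_) (hcardU ▸ Nat.pow_le_pow_right (by omega) hn)
  rw [eval_linearizedPoly]
  exact (mem_ker_linearizedEval_iff b a).mp ha u u.2

lemma linearizedEval_surjective [Fintype ι] (b : Module.Basis ι (ZMod p) U)
    (hn : Fintype.card ι ≤ n) :
    Function.Surjective (linearizedEval p n fun k => (b k : F)) := by
  obtain ⟨k, rfl⟩ := Nat.exists_eq_add_of_le hn
  have hsquare : Function.Surjective
      (linearizedEval p (Fintype.card ι) fun k => (b k : F)) :=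
    (LinearMap.injective_iff_surjective_of_finrank_eq_finrank (by simp)).mp
      (linearizedEval_injective b le_rfl)
  intro y
  obtain ⟨a, rfl⟩ := hsquare y
  exact ⟨Fin.append a 0, funext fun k => LinearMap.congr_fun (linearizedMap_append_zero p a _) _⟩

lemma finrank_ker_linearizedEval [Fintype ι] (b : Module.Basis ι (ZMod p) U) :
    Module.finrank F (LinearMap.ker (linearizedEval p n fun k => (b k : F))) =
      n - Fintype.card ι := by
  rcases le_total n (Fintype.card ι) with hn | hn
  · rw [LinearMap.ker_eq_bot.mpr (linearizedEval_injective b hn), finrank_bot]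
    omega
  · have := LinearMap.finrank_range_add_finrank_ker (linearizedEval p n fun k => (b k : F))
    rw [LinearMap.range_eq_top.mpr (linearizedEval_surjective b hn), finrank_top,
      Module.finrank_fin_fun, Module.finrank_fintype_fun_eq_card] at this
    omega

end LinearizedMap

theorem stmt3_general (p m h : ℕ) [Fact p.Prime] (F : Type) [Field F] [Fintype F]
    [Algebra (ZMod p) F] (hcard : Fintype.card F = p ^ m) (j : ℕ)
    (U : Submodule (ZMod p) F) (hU : Module.finrank (ZMod p) ↥U = j) :
    Nat.card {a : Fin (h+1) → F // ∀ u ∈ U, ∑ i : Fin (h+1), a i * u ^ p ^ (i : ℕ) = 0} =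
      (p ^ m) ^ (h + 1 - j) := by
  have : CharP F p := charP_of_injective_algebraMap' (ZMod p) p
  let b := Module.finBasisOfFinrankEq (ZMod p) U hU
  calc _ = Nat.card (LinearMap.ker (linearizedEval p (h + 1) fun k => (b k : F))) :=
        Nat.card_congr (Equiv.subtypeEquivRight fun a => (mem_ker_linearizedEval_iff b a).symm)
    _ = (p ^ m) ^ (h + 1 - j) := by
      rw [Module.natCard_eq_pow_finrank (K := F), finrank_ker_linearizedEval, Fintype.card_fin,
        Nat.card_eq_fintype_card, hcard]

theorem stmt3 (p m h : ℕ) [Fact p.Prime] (hm : 0 < m) (F : Type) [Field F] [Fintype F]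
    [Algebra (ZMod p) F] (hcard : Fintype.card F = p ^ m) (hh : h < m) (j : ℕ) (hj : j ≤ h)
    (U : Submodule (ZMod p) F) (hU : Module.finrank (ZMod p) ↥U = j) :
    Nat.card {a : Fin (h+1) → F // ∀ u ∈ U, ∑ i : Fin (h+1), a i * u ^ p ^ (i : ℕ) = 0} =
      (p ^ m) ^ (h + 1 - j) :=
  stmt3_general p m h F hcard j U hU
end

section
/- Let p be prime, q = p^m, h < m, and let C be the evaluation code of all polynomials f(x) = c + sum_{i=0}^h a_i x^{p^i} over F_q. Then every nonzero codeword of C has Hamming weight in the set {q - p^h, q - p^{h-1}, ..., q - p, q - 1, q}. In particular, the minimum distance of C is q - p^h. -/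
open Finset Polynomial

section

variable {F : Type*} [Field F]

def pPolynomials (p k : ℕ) : Submodule F (F → F) :=
  Submodule.span F (Set.range fun i : Fin (k + 1) => fun x : F => x ^ p ^ (i : ℕ))

theorem mem_pPolynomials_iff {p k : ℕ} {f : F → F} :
    f ∈ pPolynomials p k ↔ ∃ a : Fin (k + 1) → F, f = fun x => ∑ i, a i * x ^ p ^ (i : ℕ) := by
  rw [pPolynomials, Submodule.mem_span_range_iff_exists_fun]
  refine exists_congr fun a => ⟨fun h => h ▸ ?_, fun h => h ▸ ?_⟩ <;>
    ext x <;> simp [Finset.sum_apply]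

theorem pPolynomials_mono {p k l : ℕ} (h : k ≤ l) :
    (pPolynomials p k : Submodule F (F → F)) ≤ pPolynomials p l := by
  refine Submodule.span_mono ?_
  rintro _ ⟨i, rfl⟩
  exact ⟨Fin.castLE (by omega) i, rfl⟩

theorem id_mem_pPolynomials_zero {p : ℕ} : (id : F → F) ∈ pPolynomials p 0 :=
  Submodule.subset_span ⟨0, funext fun x => by simp⟩

theorem exists_polynomial_of_mem_pPolynomials {p k : ℕ} (hp : 0 < p) {f : F → F}
    (hf : f ∈ pPolynomials p k) : ∃ Q : F[X], Q.natDegree ≤ p ^ k ∧ ∀ x, Q.eval x = f x := by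
  induction hf using Submodule.span_induction with
  | mem _ hg =>
    obtain ⟨i, rfl⟩ := hg
    refine ⟨X ^ p ^ (i : ℕ), ?_, fun x => by simp⟩
    rw [natDegree_X_pow]
    exact Nat.pow_le_pow_right hp (by omega)
  | zero => exact ⟨0, by simp, fun x => by simp⟩
  | add g₁ g₂ _ _ ih₁ ih₂ =>
    obtain ⟨Q₁, hQ₁, e₁⟩ := ih₁
    obtain ⟨Q₂, hQ₂, e₂⟩ := ih₂
    exact ⟨Q₁ + Q₂, (natDegree_add_le _ _).trans (max_le hQ₁ hQ₂), fun x => by simp [e₁, e₂]⟩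
  | smul a g _ ih =>
    obtain ⟨Q, hQ, e⟩ := ih
    exact ⟨C a * Q, (natDegree_C_mul_le _ _).trans hQ, fun x => by simp [e]⟩

theorem card_filter_add_eq_zero_le [Fintype F] [DecidableEq F] {p k : ℕ} (hp : 0 < p)
    {f : F → F} (hf : f ∈ pPolynomials p k) (c : F) (hne : (fun x => c + f x) ≠ 0) :
    #{x | c + f x = 0} ≤ p ^ k := by
  obtain ⟨Q, hQ, e⟩ := exists_polynomial_of_mem_pPolynomials hp hf
  have hQc : C c + Q ≠ 0 := fun h0 => hne <| funext fun x => by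
    simpa [e] using congrArg (eval x) h0
  calc #{x | c + f x = 0} ≤ (C c + Q).natDegree := by
        refine card_le_degree_of_subset_roots fun x hx => ?_
        rw [mem_roots hQc, IsRoot, eval_add, eval_C, e]
        exact (mem_filter.1 hx).2
    _ ≤ p ^ k := (natDegree_add_le _ _).trans (max_le (by simp) hQ)

variable {p : ℕ} [Fact p.Prime] [CharP F p]

theorem map_add_of_mem_pPolynomials {k : ℕ} {f : F → F} (hf : f ∈ pPolynomials p k) (x y : F) :
    f (x + y) = f x + f y := by
  induction hf using Submodule.span_induction with
  | mem _ hg =>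
    obtain ⟨i, rfl⟩ := hg
    exact add_pow_char_pow x y p i
  | zero => simp
  | add g₁ g₂ _ _ ih₁ ih₂ => simp only [Pi.add_apply, ih₁, ih₂]; ring
  | smul a g _ ih => simp only [Pi.smul_apply, ih, smul_add]

def pPolynomials.toAddMonoidHom {k : ℕ} {f : F → F} (hf : f ∈ pPolynomials p k) : F →+ F :=
  AddMonoidHom.mk' f (map_add_of_mem_pPolynomials hf)

theorem pow_char_mem_pPolynomials {k : ℕ} {f : F → F} (hf : f ∈ pPolynomials p k) :
    (fun x => f x ^ p) ∈ pPolynomials p (k + 1) := by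
  induction hf using Submodule.span_induction with
  | mem _ hg =>
    obtain ⟨i, rfl⟩ := hg
    refine Submodule.subset_span ⟨i.succ, funext fun x => ?_⟩
    simp [← pow_mul, pow_succ]
  | zero =>
    convert (pPolynomials p (k + 1)).zero_mem using 1
    ext
    simp [zero_pow (Fact.out : p.Prime).ne_zero]
  | add g₁ g₂ _ _ ih₁ ih₂ =>
    convert (pPolynomials p (k + 1)).add_mem ih₁ ih₂ using 1
    ext
    simp [add_pow_char]
  | smul a g _ ih =>
    convert (pPolynomials p (k + 1)).smul_mem (a ^ p) ih using 1
    ext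
    simp [mul_pow]

end

theorem card_filter_ne_zero_eq_card_sub {α M : Type*} [Fintype α] [Zero M] [DecidableEq M]
    (w : α → M) : #{x | w x ≠ 0} = Fintype.card α - #{x | w x = 0} := by
  have := card_filter_add_card_filter_not (s := univ) fun x => w x = 0
  rw [card_univ] at this
  simp only [ne_eq]
  omega

section

variable {G H : Type*} [AddGroup G] [Fintype G] [AddGroup H] [DecidableEq H]

theorem AddMonoidHom.card_filter_mem_eq_mul (φ : G →+ H) (T : Finset H)
    (hT : ∀ y ∈ T, y ∈ Set.range φ) : #{x | φ x ∈ T} = #T * #{x | φ x = 0} := by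
  rw [card_eq_sum_card_fiberwise (s := {x | φ x ∈ T}) (t := T) fun x hx => (mem_filter.1 hx).2]
  refine sum_const_nat fun y hy => ?_
  rw [filter_filter]
  calc #{x | φ x ∈ T ∧ φ x = y} = #{x | φ x = y} :=
        congrArg card (filter_congr fun x _ => and_iff_right_of_imp fun e => e ▸ hy)
    _ = #{x | φ x = 0} := card_fiber_eq_of_mem_range φ (hT y hy) ⟨0, map_zero φ⟩

theorem AddMonoidHom.exists_card_filter_eq_zero_eq_pow {p m : ℕ} (hp : p.Prime)
    (hG : Fintype.card G = p ^ m) (φ : G →+ H) : ∃ j, #{x | φ x = 0} = p ^ j := by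
  have hker : #{x | φ x = 0} = Nat.card φ.ker := by
    rw [Nat.card_eq_fintype_card, ← Fintype.card_subtype]
    exact Fintype.card_congr (Equiv.subtypeEquivRight fun x => φ.mem_ker.symm)
  have hdvd : Nat.card φ.ker ∣ p ^ m := by
    simpa [Nat.card_eq_fintype_card, hG] using φ.ker.card_addSubgroup_dvd_card
  obtain ⟨j, -, hj⟩ := (Nat.dvd_prime_pow hp).1 hdvd
  exact ⟨j, hker.trans hj⟩

end

section

variable {F : Type*} [Field F] [Fintype F] [DecidableEq F] {p : ℕ} [Fact p.Prime] [CharP F p]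

theorem card_filter_add_eq_zero_eq_zero_or_pow {m h : ℕ} (hF : Fintype.card F = p ^ m)
    {f : F → F} (hf : f ∈ pPolynomials p h) (c : F) (hne : (fun x => c + f x) ≠ 0) :
    #{x | c + f x = 0} = 0 ∨ ∃ j ≤ h, #{x | c + f x = 0} = p ^ j := by
  have hp : p.Prime := Fact.out
  set φ := pPolynomials.toAddMonoidHom hf
  have hfiber : #{x | c + f x = 0} = #{x | φ x = -c} :=
    congrArg card (filter_congr fun x _ => by rw [add_comm, ← eq_neg_iff_add_eq_zero]; rfl)
  by_cases hc : -c ∈ Set.range φ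
  · obtain ⟨j, hj⟩ := φ.exists_card_filter_eq_zero_eq_pow hp hF
    have hzeros : #{x | c + f x = 0} = p ^ j := by
      rw [hfiber, AddMonoidHom.card_fiber_eq_of_mem_range φ hc ⟨0, map_zero φ⟩, hj]
    refine Or.inr ⟨j, ?_, hzeros⟩
    have := hzeros ▸ card_filter_add_eq_zero_le hp.pos hf c hne
    exact (Nat.pow_le_pow_iff_right hp.one_lt).1 this
  · refine Or.inl (hfiber.trans (card_eq_zero.2 (filter_eq_empty_iff.2 fun x _ hx => ?_)))
    exact hc ⟨x, hx⟩

variable (p) in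
theorem card_filter_pow_char_sub_eq_zero (φ : F →+ F) {v : F} (hv : φ v = 1) :
    #{x | φ x ^ p - φ x = 0} = p * #{x | φ x = 0} := by
  classical
  let T : Finset F := {y | y ∈ (⊥ : Subfield F)}
  have hT : #T = p := by
    rw [← Subfield.card_bot F p, Nat.card_eq_fintype_card, ← Fintype.card_subtype]
  have hrange : ∀ y ∈ T, y ∈ Set.range φ := fun y hy => by
    obtain ⟨n, rfl⟩ := (mem_bot_iff_intCast p F).1 (mem_filter.1 hy).2
    exact ⟨n • v, by rw [map_zsmul, hv, zsmul_one]⟩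
  calc #{x | φ x ^ p - φ x = 0} = #{x | φ x ∈ T} := congrArg card <| filter_congr fun x _ => by
        simp [T, Subfield.mem_bot_iff_pow_eq_self F p, sub_eq_zero]
    _ = p * #{x | φ x = 0} := by rw [φ.card_filter_mem_eq_mul T hrange, hT]

theorem exists_mem_pPolynomials_card_filter_eq_zero :
    ∀ k, p ^ k < Fintype.card F → ∃ f : F → F, f ∈ pPolynomials p k ∧ #{x | f x = 0} = p ^ k
  | 0, _ => ⟨id, id_mem_pPolynomials_zero, by simp [filter_eq']⟩
  | k + 1, hk => by
    have hp : p.Prime := Fact.out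
    obtain ⟨f, hf, hzeros⟩ := exists_mem_pPolynomials_card_filter_eq_zero k
      ((Nat.pow_lt_pow_right hp.one_lt k.lt_succ_self).trans hk)
    obtain ⟨v, hv⟩ : ∃ v, f v ≠ 0 := by
      by_contra! h0
      rw [filter_true_of_mem fun x _ => h0 x, card_univ] at hzeros
      rw [hzeros] at hk
      exact (Nat.pow_le_pow_right hp.pos k.le_succ).not_gt hk
    have hg : (f v)⁻¹ • f ∈ pPolynomials p k := Submodule.smul_mem _ _ hf
    refine ⟨fun x => ((f v)⁻¹ • f) x ^ p - ((f v)⁻¹ • f) x,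
      sub_mem (pow_char_mem_pPolynomials hg) (pPolynomials_mono k.le_succ hg), ?_⟩
    calc _ = p * #{x | ((f v)⁻¹ • f) x = 0} := card_filter_pow_char_sub_eq_zero p
          (pPolynomials.toAddMonoidHom hg) (v := v) (by simp [pPolynomials.toAddMonoidHom, hv])
      _ = p ^ (k + 1) := by simp [hv, hzeros, pow_succ, mul_comm]

end

open scoped Classical in
theorem stmt11_general (p m h : ℕ) [Fact p.Prime] (F : Type) [Field F] [Fintype F]
    [Algebra (ZMod p) F] (hcard : Fintype.card F = p ^ m) (hh : h < m) :
    (∀ w : F → F,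
      (∃ (c : F) (a : Fin (h+1) → F),
        w = fun x => c + ∑ i : Fin (h+1), a i * x ^ p ^ (i : ℕ)) → w ≠ 0 →
      ((∃ j ≤ h, (Finset.univ.filter fun x => w x ≠ 0).card = p ^ m - p ^ j) ∨
        (Finset.univ.filter fun x => w x ≠ 0).card = p ^ m)) ∧
    IsLeast {n : ℕ | ∃ w : F → F,
      (∃ (c : F) (a : Fin (h+1) → F),
        w = fun x => c + ∑ i : Fin (h+1), a i * x ^ p ^ (i : ℕ)) ∧ w ≠ 0 ∧
      (Finset.univ.filter fun x => w x ≠ 0).card = n} (p ^ m - p ^ h) := by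
  have hp : p.Prime := Fact.out
  have : CharP F p := charP_of_injective_algebraMap (algebraMap (ZMod p) F).injective p
  have weights : ∀ w : F → F, (∃ (c : F) (a : Fin (h+1) → F),
        w = fun x => c + ∑ i : Fin (h+1), a i * x ^ p ^ (i : ℕ)) → w ≠ 0 →
      ((∃ j ≤ h, #{x | w x ≠ 0} = p ^ m - p ^ j) ∨ #{x | w x ≠ 0} = p ^ m) := by
    rintro w ⟨c, a, rfl⟩ hw
    rw [card_filter_ne_zero_eq_card_sub, hcard]
    rcases card_filter_add_eq_zero_eq_zero_or_pow hcard (mem_pPolynomials_iff.2 ⟨a, rfl⟩) c hw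
      with h0 | ⟨j, hj, hzeros⟩
    · exact Or.inr (by rw [h0, Nat.sub_zero])
    · exact Or.inl ⟨j, hj, by rw [hzeros]⟩
  refine ⟨weights, ?_, ?_⟩
  · obtain ⟨f, hf, hzeros⟩ := exists_mem_pPolynomials_card_filter_eq_zero h
      (hcard ▸ Nat.pow_lt_pow_right hp.one_lt hh)
    obtain ⟨a, rfl⟩ := mem_pPolynomials_iff.1 hf
    refine ⟨_, ⟨0, a, rfl⟩, fun h0 => ?_, by simp only [card_filter_ne_zero_eq_card_sub, hcard, zero_add, hzeros]⟩
    rw [filter_true_of_mem fun x _ => by simpa using congrFun h0 x, card_univ, hcard] at hzeros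
    exact (Nat.pow_lt_pow_right hp.one_lt hh).ne' hzeros
  · rintro n ⟨w, hw, hw0, rfl⟩
    rcases weights w hw hw0 with ⟨j, hj, e⟩ | e <;> rw [e]
    · exact Nat.sub_le_sub_left (Nat.pow_le_pow_right hp.pos hj) _
    · exact Nat.sub_le _ _

open scoped Classical in
theorem stmt11 (p m h : ℕ) [Fact p.Prime] (hm : 0 < m) (F : Type) [Field F] [Fintype F]
    [Algebra (ZMod p) F] (hcard : Fintype.card F = p ^ m) (hh : h < m) :
    (∀ w : F → F,
      (∃ (c : F) (a : Fin (h+1) → F),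
        w = fun x => c + ∑ i : Fin (h+1), a i * x ^ p ^ (i : ℕ)) → w ≠ 0 →
      ((∃ j ≤ h, (Finset.univ.filter fun x => w x ≠ 0).card = p ^ m - p ^ j) ∨
        (Finset.univ.filter fun x => w x ≠ 0).card = p ^ m)) ∧
    IsLeast {n : ℕ | ∃ w : F → F,
      (∃ (c : F) (a : Fin (h+1) → F),
        w = fun x => c + ∑ i : Fin (h+1), a i * x ^ p ^ (i : ℕ)) ∧ w ≠ 0 ∧
      (Finset.univ.filter fun x => w x ≠ 0).card = n} (p ^ m - p ^ h) :=
  stmt11_general p m h F hcard hh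
end
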